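/- Let λ ∈ [0,1) and let v be a random variable distributed according to a λ-regular CDF F with density on [a,b) ⊆ [0,∞), with finite mean m = E[v]. Then P[v ≥ m] = 1 − F(m) ≥ c(λ). -/

import Mathlib

open MeasureTheory Filter

/-- The `j`-th largest value (1-indexed) among the `t` coordinates of `v`. -/
noncomputable def orderStat (t j : ℕ) (v : Fin t → ℝ) : ℝ :=
  ((List.ofFn v).insertionSort (· ≤ ·)).getD (t - j) 0

/-- The expectation of the `j`-th largest of `t` i.i.d. draws from `μ`. -/
noncomputable def orderStatExp (μ : Measure ℝ) (j t : ℕ) : ℝ :=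
  ∫ v, orderStat t j v ∂(Measure.pi fun _ : Fin t => μ)

/-- `F` is a CDF with density `f` on `[a, b)` (where possibly `b = ∞`):
differentiable with positive derivative `f` there, `F a = 0`, `F` nondecreasing,
and `F x → 1` as `x → b`. -/
def IsCDF (F f : ℝ → ℝ) (a : ℝ) (b : EReal) : Prop :=
  (a : EReal) < b ∧ Monotone F ∧ F a = 0 ∧
  (∀ x : ℝ, a ≤ x → (x : EReal) < b → HasDerivAt F (f x) x ∧ 0 < f x) ∧
  Tendsto F (Filter.comap (fun x : ℝ => (x : EReal)) (nhdsWithin b (Set.Iio b))) (nhds 1)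

/-- `μ` is the probability measure on `[a, b)` induced by the CDF `F`. -/
def InducedBy (μ : Measure ℝ) (F : ℝ → ℝ) (a : ℝ) (b : EReal) : Prop :=
  IsProbabilityMeasure μ ∧
  ∀ x : ℝ, a ≤ x → (x : EReal) < b → μ (Set.Iic x) = ENNReal.ofReal (F x)

/-- `λ`-regularity of the CDF `F` with density `f` on `[a, b)`. -/
def LambdaRegular (l : ℝ) (F f : ℝ → ℝ) (a : ℝ) (b : EReal) : Prop :=
  MonotoneOn (fun v => l * v - (1 - F v) / f v) {x : ℝ | a ≤ x ∧ (x : EReal) < b}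

/-- `c(λ) = (1 - λ)^(1/λ)` for `λ ∈ (0,1]`, with `c(0) = 1/e`. -/
noncomputable def cReg (l : ℝ) : ℝ := if l = 0 then (Real.exp 1)⁻¹ else (1 - l) ^ (1 / l)

open Set Topology ENNReal

namespace Stmt18Aux


lemma iUnion_Iic_seq (x : ℝ) : (⋃ n : ℕ, Iic (x - 1 / (n + 1))) = Iio x := by
  ext y
  simp only [mem_iUnion, mem_Iic, mem_Iio]
  constructor
  · rintro ⟨n, hn⟩
    have : 0 < 1 / ((n : ℝ) + 1) := by positivity
    linarith
  · intro hy
    obtain ⟨n, hn⟩ := exists_nat_one_div_lt (by linarith : (0:ℝ) < x - y)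
    exact ⟨n, by linarith⟩

lemma seq_tendsto (x : ℝ) :
    Tendsto (fun n : ℕ => x - 1 / ((n : ℝ) + 1)) atTop (𝓝 x) := by
  have := tendsto_one_div_add_atTop_nhds_zero_nat (𝕜 := ℝ)
  have h2 := this.const_sub x
  simpa using h2

lemma meas_Iio_eq {μ : Measure ℝ} {x : ℝ} {L : ℝ≥0∞}
    (h : Tendsto (fun n : ℕ => μ (Iic (x - 1 / ((n : ℝ) + 1)))) atTop (𝓝 L)) :
    μ (Iio x) = L := by
  have hmono : Monotone (fun n : ℕ => Iic (x - 1 / ((n : ℝ) + 1))) := by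
    intro n k hnk
    apply Iic_subset_Iic.mpr
    have h1 : ((n:ℝ) + 1) ≤ ((k:ℝ) + 1) := by
      have := (Nat.cast_le (α := ℝ)).mpr hnk; linarith
    have := one_div_le_one_div_of_le (by positivity : (0:ℝ) < (n:ℝ)+1) h1
    linarith
  have := tendsto_measure_iUnion_atTop (μ := μ) hmono
  rw [iUnion_Iic_seq] at this
  simp only [Function.comp_def] at this
  exact tendsto_nhds_unique this h



lemma comparison_left {G G' ψ ψ' : ℝ → ℝ} {t u : ℝ} (htu : t ≤ u)
    (hG : ∀ v ∈ Icc t u, HasDerivAt G (G' v) v)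
    (hGpos : ∀ v ∈ Icc t u, 0 < G v)
    (hψ : ∀ v ∈ Icc t u, HasDerivAt ψ (ψ' v) v)
    (hcmp : ∀ v ∈ Icc t u, 0 ≤ G' v / G v + ψ' v) :
    Real.log (G t) + ψ t ≤ Real.log (G u) + ψ u := by
  have hd : ∀ v ∈ Icc t u, HasDerivAt (fun v => Real.log (G v) + ψ v)
      (G' v / G v + ψ' v) v := fun v hv =>
    ((hG v hv).log (hGpos v hv).ne').add (hψ v hv)
  have hmono : MonotoneOn (fun v => Real.log (G v) + ψ v) (Icc t u) := by
    apply monotoneOn_of_hasDerivWithinAt_nonneg (convex_Icc t u)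
      (fun v hv => ((hd v hv).continuousAt).continuousWithinAt)
      (f' := fun v => G' v / G v + ψ' v)
      (fun v hv => ((hd v (interior_subset hv)).hasDerivWithinAt))
      (fun v hv => hcmp v (interior_subset hv))
  exact hmono (left_mem_Icc.mpr htu) (right_mem_Icc.mpr htu) htu

lemma comparison_right {G G' ψ ψ' : ℝ → ℝ} {t u : ℝ} (htu : t ≤ u)
    (hG : ∀ v ∈ Icc t u, HasDerivAt G (G' v) v)
    (hGpos : ∀ v ∈ Icc t u, 0 < G v)
    (hψ : ∀ v ∈ Icc t u, HasDerivAt ψ (ψ' v) v)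
    (hcmp : ∀ v ∈ Icc t u, G' v / G v + ψ' v ≤ 0) :
    Real.log (G u) + ψ u ≤ Real.log (G t) + ψ t := by
  have hd : ∀ v ∈ Icc t u, HasDerivAt (fun v => Real.log (G v) + ψ v)
      (G' v / G v + ψ' v) v := fun v hv =>
    ((hG v hv).log (hGpos v hv).ne').add (hψ v hv)
  have hmono : AntitoneOn (fun v => Real.log (G v) + ψ v) (Icc t u) := by
    apply antitoneOn_of_hasDerivWithinAt_nonpos (convex_Icc t u)
      (fun v hv => ((hd v hv).continuousAt).continuousWithinAt)
      (f' := fun v => G' v / G v + ψ' v)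
      (fun v hv => ((hd v (interior_subset hv)).hasDerivWithinAt))
      (fun v hv => hcmp v (interior_subset hv))
  exact hmono (left_mem_Icc.mpr htu) (right_mem_Icc.mpr htu) htu

lemma exp_form {lam : ℝ} (hlam : 0 < lam) {A d : ℝ} (hA : 0 < A) (hd : 0 < d) :
    A * d ^ (1 / lam) = Real.exp (Real.log A + (1 / lam) * Real.log d) := by
  rw [Real.exp_add, Real.exp_log hA, Real.rpow_def_of_pos hd, mul_comm (1/lam)]


lemma bound_pos {F f : ℝ → ℝ} {a m ρ lam : ℝ} {b : EReal}
    (hlam : 0 < lam)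
    (hd : ∀ x : ℝ, a ≤ x → (x : EReal) < b → HasDerivAt F (f x) x ∧ 0 < f x)
    (hFlt : ∀ x : ℝ, a ≤ x → (x : EReal) < b → F x < 1)
    (hreg : MonotoneOn (fun v => lam * v - (1 - F v) / f v) {x : ℝ | a ≤ x ∧ (x : EReal) < b})
    (ham : a ≤ m) (hmb : (m : EReal) < b)
    (hρ : ρ = (1 - F m) / f m)
    {t : ℝ} (hat : a ≤ t) (htb : (t : EReal) < b) (hden : 0 < ρ + lam * (t - m)) :
    (1 - F t) * (ρ + lam * (t - m)) ^ (1 / lam) ≤ (1 - F m) * ρ ^ (1 / lam) := by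
  have hρpos : 0 < ρ := by
    rw [hρ]
    exact div_pos (by linarith [hFlt m ham hmb]) (hd m ham hmb).2
  have hGt : 0 < 1 - F t := by linarith [hFlt t hat htb]
  have hGm : 0 < 1 - F m := by linarith [hFlt m ham hmb]
  have hmS : m ∈ {x : ℝ | a ≤ x ∧ (x : EReal) < b} := ⟨ham, hmb⟩
  rcases le_total t m with h | h
  · -- t ≤ m
    have hmem : ∀ v ∈ Icc t m, v ∈ {x : ℝ | a ≤ x ∧ (x : EReal) < b} := by
      intro v hv
      exact ⟨le_trans hat hv.1, lt_of_le_of_lt (EReal.coe_le_coe_iff.mpr hv.2) hmb⟩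
    have hdenv : ∀ v ∈ Icc t m, 0 < ρ + lam * (v - m) := by
      intro v hv
      have : lam * (t - m) ≤ lam * (v - m) := by
        apply mul_le_mul_of_nonneg_left (by linarith [hv.1]) hlam.le
      linarith
    have hψd : ∀ v ∈ Icc t m, HasDerivAt (fun v => (1/lam) * Real.log (ρ + lam * (v - m)))
        (1 / (ρ + lam * (v - m))) v := by
      intro v hv
      have h1 : HasDerivAt (fun v : ℝ => ρ + lam * (v - m)) lam v := by
        simpa using (((hasDerivAt_id v).sub_const m).const_mul lam).const_add ρ
      have h2 := (h1.log (hdenv v hv).ne').const_mul (1/lam)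
      refine h2.congr_deriv ?_
      field_simp
    have key := comparison_left h
      (G := fun v => 1 - F v) (G' := fun v => -(f v))
      (fun v hv => ((hd v (hmem v hv).1 (hmem v hv).2).1.const_sub 1))
      (fun v hv => show 0 < 1 - F v by linarith [hFlt v (hmem v hv).1 (hmem v hv).2])
      hψd
      (fun v hv => show 0 ≤ -(f v) / (1 - F v) + 1 / (ρ + lam * (v - m)) by
        have hreg' := hreg (hmem v hv) hmS hv.2
        simp only at hreg'
        rw [hρ]
        have hfv := (hd v (hmem v hv).1 (hmem v hv).2).2
        have hGv : 0 < 1 - F v := by linarith [hFlt v (hmem v hv).1 (hmem v hv).2]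
        have hdv := hdenv v hv
        rw [hρ] at hdv
        -- from hreg' : lam*v - Gv/fv ≤ lam*m - ρ, so d := ρ + lam*(v-m) ≤ Gv/fv
        have h3 : (1 - F m) / f m + lam * (v - m) ≤ (1 - F v) / f v := by linarith
        have h4 : ((1 - F m) / f m + lam * (v - m)) * f v ≤ 1 - F v :=
          (le_div_iff₀ hfv).mp h3
        have h5 : f v / (1 - F v) ≤ 1 / ((1 - F m) / f m + lam * (v - m)) := by
          rw [div_le_div_iff₀ hGv hdv]
          nlinarith
        have : -(f v) / (1 - F v) = -(f v / (1 - F v)) := by ring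
        rw [this]
        linarith)
    rw [exp_form hlam hGt (by exact hden), exp_form hlam hGm hρpos]
    apply Real.exp_le_exp.mpr
    simpa using key
  · -- m ≤ t
    have hmem : ∀ v ∈ Icc m t, v ∈ {x : ℝ | a ≤ x ∧ (x : EReal) < b} := by
      intro v hv
      exact ⟨le_trans ham hv.1, lt_of_le_of_lt (EReal.coe_le_coe_iff.mpr hv.2) htb⟩
    have hdenv : ∀ v ∈ Icc m t, 0 < ρ + lam * (v - m) := by
      intro v hv
      have : 0 ≤ lam * (v - m) := by
        apply mul_nonneg hlam.le (by linarith [hv.1])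
      linarith
    have hψd : ∀ v ∈ Icc m t, HasDerivAt (fun v => (1/lam) * Real.log (ρ + lam * (v - m)))
        (1 / (ρ + lam * (v - m))) v := by
      intro v hv
      have h1 : HasDerivAt (fun v : ℝ => ρ + lam * (v - m)) lam v := by
        simpa using (((hasDerivAt_id v).sub_const m).const_mul lam).const_add ρ
      have h2 := (h1.log (hdenv v hv).ne').const_mul (1/lam)
      refine h2.congr_deriv ?_
      field_simp
    have key := comparison_right h
      (G := fun v => 1 - F v) (G' := fun v => -(f v))
      (fun v hv => ((hd v (hmem v hv).1 (hmem v hv).2).1.const_sub 1))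
      (fun v hv => show 0 < 1 - F v by linarith [hFlt v (hmem v hv).1 (hmem v hv).2])
      hψd
      (fun v hv => show -(f v) / (1 - F v) + 1 / (ρ + lam * (v - m)) ≤ 0 by
        have hreg' := hreg hmS (hmem v hv) hv.1
        simp only at hreg'
        rw [hρ]
        have hfv := (hd v (hmem v hv).1 (hmem v hv).2).2
        have hGv : 0 < 1 - F v := by linarith [hFlt v (hmem v hv).1 (hmem v hv).2]
        have hdv := hdenv v hv
        rw [hρ] at hdv
        have h3 : (1 - F v) / f v ≤ (1 - F m) / f m + lam * (v - m) := by linarith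
        have h4 : 1 - F v ≤ ((1 - F m) / f m + lam * (v - m)) * f v :=
          (div_le_iff₀ hfv).mp h3
        have h5 : 1 / ((1 - F m) / f m + lam * (v - m)) ≤ f v / (1 - F v) := by
          rw [div_le_div_iff₀ hdv hGv]
          nlinarith
        have : -(f v) / (1 - F v) = -(f v / (1 - F v)) := by ring
        rw [this]
        linarith)
    rw [exp_form hlam hGt (by exact hden), exp_form hlam hGm hρpos]
    apply Real.exp_le_exp.mpr
    simpa using key


lemma bound_zero {F f : ℝ → ℝ} {a m ρ : ℝ} {b : EReal}
    (hd : ∀ x : ℝ, a ≤ x → (x : EReal) < b → HasDerivAt F (f x) x ∧ 0 < f x)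
    (hFlt : ∀ x : ℝ, a ≤ x → (x : EReal) < b → F x < 1)
    (hreg : MonotoneOn (fun v => -((1 - F v) / f v)) {x : ℝ | a ≤ x ∧ (x : EReal) < b})
    (ham : a ≤ m) (hmb : (m : EReal) < b)
    (hρ : ρ = (1 - F m) / f m)
    {t : ℝ} (hat : a ≤ t) (htb : (t : EReal) < b) :
    (1 - F t) * Real.exp ((t - m) / ρ) ≤ 1 - F m := by
  have hρpos : 0 < ρ := by
    rw [hρ]
    exact div_pos (by linarith [hFlt m ham hmb]) (hd m ham hmb).2
  have hGt : 0 < 1 - F t := by linarith [hFlt t hat htb]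
  have hGm : 0 < 1 - F m := by linarith [hFlt m ham hmb]
  have hmS : m ∈ {x : ℝ | a ≤ x ∧ (x : EReal) < b} := ⟨ham, hmb⟩
  have hψd : ∀ v : ℝ, HasDerivAt (fun v : ℝ => (v - m) / ρ) (1 / ρ) v := by
    intro v
    simpa using ((hasDerivAt_id v).sub_const m).div_const ρ
  have hconv : ∀ A s : ℝ, 0 < A → A * Real.exp s = Real.exp (Real.log A + s) := by
    intro A s hA
    rw [Real.exp_add, Real.exp_log hA]
  rcases le_total t m with h | h
  · have hmem : ∀ v ∈ Icc t m, v ∈ {x : ℝ | a ≤ x ∧ (x : EReal) < b} := by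
      intro v hv
      exact ⟨le_trans hat hv.1, lt_of_le_of_lt (EReal.coe_le_coe_iff.mpr hv.2) hmb⟩
    have key := comparison_left h
      (G := fun v => 1 - F v) (G' := fun v => -(f v))
      (fun v hv => ((hd v (hmem v hv).1 (hmem v hv).2).1.const_sub 1))
      (fun v hv => show 0 < 1 - F v by linarith [hFlt v (hmem v hv).1 (hmem v hv).2])
      (fun v _ => hψd v)
      (fun v hv => show 0 ≤ -(f v) / (1 - F v) + 1 / ρ by
        have hreg' := hreg (hmem v hv) hmS hv.2
        simp only at hreg'
        rw [hρ]
        have hfv := (hd v (hmem v hv).1 (hmem v hv).2).2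
        have hGv : 0 < 1 - F v := by linarith [hFlt v (hmem v hv).1 (hmem v hv).2]
        have hρ' : 0 < (1 - F m) / f m := by rw [← hρ]; exact hρpos
        have h3 : (1 - F m) / f m ≤ (1 - F v) / f v := by linarith
        have h4 : ((1 - F m) / f m) * f v ≤ 1 - F v := (le_div_iff₀ hfv).mp h3
        have h5 : f v / (1 - F v) ≤ 1 / ((1 - F m) / f m) := by
          rw [div_le_div_iff₀ hGv hρ']
          nlinarith
        have : -(f v) / (1 - F v) = -(f v / (1 - F v)) := by ring
        rw [this]
        linarith)
    rw [hconv _ _ hGt,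
      show (1 - F m : ℝ) = Real.exp (Real.log (1 - F m)) from (Real.exp_log hGm).symm]
    apply Real.exp_le_exp.mpr
    have h0 : (m - m) / ρ = 0 := by simp
    simp only [h0, add_zero] at key
    simpa using key
  · have hmem : ∀ v ∈ Icc m t, v ∈ {x : ℝ | a ≤ x ∧ (x : EReal) < b} := by
      intro v hv
      exact ⟨le_trans ham hv.1, lt_of_le_of_lt (EReal.coe_le_coe_iff.mpr hv.2) htb⟩
    have key := comparison_right h
      (G := fun v => 1 - F v) (G' := fun v => -(f v))
      (fun v hv => ((hd v (hmem v hv).1 (hmem v hv).2).1.const_sub 1))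
      (fun v hv => show 0 < 1 - F v by linarith [hFlt v (hmem v hv).1 (hmem v hv).2])
      (fun v _ => hψd v)
      (fun v hv => show -(f v) / (1 - F v) + 1 / ρ ≤ 0 by
        have hreg' := hreg hmS (hmem v hv) hv.1
        simp only at hreg'
        rw [hρ]
        have hfv := (hd v (hmem v hv).1 (hmem v hv).2).2
        have hGv : 0 < 1 - F v := by linarith [hFlt v (hmem v hv).1 (hmem v hv).2]
        have hρ' : 0 < (1 - F m) / f m := by rw [← hρ]; exact hρpos
        have h3 : (1 - F v) / f v ≤ (1 - F m) / f m := by linarith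
        have h4 : 1 - F v ≤ ((1 - F m) / f m) * f v := (div_le_iff₀ hfv).mp h3
        have h5 : 1 / ((1 - F m) / f m) ≤ f v / (1 - F v) := by
          rw [div_le_div_iff₀ hρ' hGv]
          nlinarith
        have : -(f v) / (1 - F v) = -(f v / (1 - F v)) := by ring
        rw [this]
        linarith)
    rw [hconv _ _ hGt,
      show (1 - F m : ℝ) = Real.exp (Real.log (1 - F m)) from (Real.exp_log hGm).symm]
    apply Real.exp_le_exp.mpr
    have h0 : (m - m) / ρ = 0 := by simp
    simp only [h0, add_zero] at key
    simpa using key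



lemma integral_tail_pos {lam ρ m z : ℝ} (h0 : 0 < lam) (h1 : lam < 1) 
    (hz : 0 < ρ + lam * (z - m)) :
    IntegrableOn (fun t => (ρ + lam * (t - m)) ^ (-(1 / lam))) (Ioi z) ∧
    ∫ t in Ioi z, (ρ + lam * (t - m)) ^ (-(1 / lam)) =
      (ρ + lam * (z - m)) ^ ((lam - 1) / lam) / (1 - lam) := by
  set u : ℝ → ℝ := fun t => ρ + lam * (t - m) with hu
  have hupos : ∀ t ∈ Ici z, 0 < u t := by
    intro t ht
    have : lam * (z - m) ≤ lam * (t - m) := by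
      apply mul_le_mul_of_nonneg_left (by linarith [mem_Ici.mp ht]) h0.le
    simp only [hu]; linarith
  have hud : ∀ t : ℝ, HasDerivAt u lam t := by
    intro t
    simpa [hu] using (((hasDerivAt_id t).sub_const m).const_mul lam).const_add ρ
  set g : ℝ → ℝ := fun t => (u t) ^ ((lam - 1) / lam) / (lam - 1) with hg
  have hgd : ∀ t ∈ Ici z, HasDerivAt g ((u t) ^ (-(1 / lam))) t := by
    intro t ht
    have h := (HasDerivAt.rpow_const (p := (lam - 1) / lam) (hud t)
      (Or.inl (hupos t ht).ne')).div_const (lam - 1)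
    refine h.congr_deriv ?_
    have hne : u t ≠ 0 := (hupos t ht).ne'
    have he : (lam - 1) / lam - 1 = -(1/lam) + ((lam-1)/lam - 1) + (1/lam) := by ring
    rw [show lam * ((lam - 1) / lam) * u t ^ ((lam - 1) / lam - 1) / (lam - 1)
        = u t ^ ((lam - 1) / lam - 1) * (lam * ((lam-1)/lam) / (lam - 1)) by ring]
    rw [show lam * ((lam-1)/lam) / (lam - 1) = 1 by
      rw [mul_div_assoc']
      rw [mul_comm lam, mul_div_assoc, div_self h0.ne', mul_one, div_self (by linarith : lam - (1:ℝ) ≠ 0)]]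
    rw [mul_one]
    congr 1
    field_simp
    ring
  have hnn : ∀ t ∈ Ioi z, 0 ≤ (u t) ^ (-(1 / lam)) :=
    fun t ht => (Real.rpow_pos_of_pos (hupos t (Ioi_subset_Ici_self ht)) _).le
  have hlim : Tendsto g atTop (𝓝 0) := by
    have hutop : Tendsto u atTop atTop := by
      apply tendsto_atTop_add_const_left
      exact (tendsto_atTop_add_const_right _ _ tendsto_id).const_mul_atTop h0
    have hexp : ((lam - 1) / lam) = -((1 - lam) / lam) := by ring
    have h2 : Tendsto (fun x : ℝ => x ^ ((lam - 1) / lam)) atTop (𝓝 0) := by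
      rw [hexp]
      exact tendsto_rpow_neg_atTop (div_pos (by linarith) h0)
    have := (h2.comp hutop).div_const (lam - 1)
    simpa using this
  have key := integral_Ioi_of_hasDerivAt_of_nonneg'
    (fun t ht => hgd t ht) hnn hlim
  have keyint := integrableOn_Ioi_deriv_of_nonneg'
    (fun t ht => hgd t ht) hnn hlim
  refine ⟨keyint, ?_⟩
  rw [key]
  simp only [hg, hu]
  rw [zero_sub]
  rw [show (1:ℝ) - lam = -(lam - 1) from by ring, div_neg]




lemma integral_tail_zero {ρ m z q : ℝ} (hρ : 0 < ρ) (hq : 0 < q) :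
    IntegrableOn (fun t => q * Real.exp (-(t - m) / ρ)) (Ioi z) ∧
    ∫ t in Ioi z, q * Real.exp (-(t - m) / ρ) = q * ρ * Real.exp (-(z - m) / ρ) := by
  set g : ℝ → ℝ := fun t => -(q * ρ) * Real.exp (-(t - m) / ρ) with hg
  have hgd : ∀ t ∈ Ici z, HasDerivAt g (q * Real.exp (-(t - m) / ρ)) t := by
    intro t _
    have h1 : HasDerivAt (fun t : ℝ => -(t - m) / ρ) (-1 / ρ) t := by
      simpa using (((hasDerivAt_id t).sub_const m).neg).div_const ρ
    have h := (h1.exp).const_mul (-(q * ρ))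
    refine h.congr_deriv ?_
    field_simp
  have hnn : ∀ t ∈ Ioi z, 0 ≤ q * Real.exp (-(t - m) / ρ) :=
    fun t _ => by positivity
  have hlim : Tendsto g atTop (𝓝 0) := by
    have h1 : Tendsto (fun t : ℝ => -(t - m) / ρ) atTop atBot := by
      apply Tendsto.atBot_div_const hρ
      exact tendsto_neg_atBot_iff.mpr (tendsto_atTop_add_const_right _ _ tendsto_id)
    have h2 := (Real.tendsto_exp_atBot.comp h1).const_mul (-(q * ρ))
    rw [mul_zero] at h2
    exact h2
  have key := integral_Ioi_of_hasDerivAt_of_nonneg' hgd hnn hlim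
  have keyint := integrableOn_Ioi_deriv_of_nonneg' hgd hnn hlim
  refine ⟨keyint, ?_⟩
  rw [key, hg]
  ring



lemma mean_le {μ : Measure ℝ} [IsProbabilityMeasure μ] {m z : ℝ}
    (hm : m = ∫ x, x ∂μ) (hint : Integrable (fun x : ℝ => x) μ)
    (hae : 0 ≤ᵐ[μ] fun x : ℝ => x) (hz : 0 ≤ z)
    {D : ℝ → ℝ} (hD : IntegrableOn D (Ioi z))
    (hDnn : ∀ t ∈ Ioi z, (μ (Ioi t)).toReal ≤ D t) :
    m ≤ z + ∫ t in Ioi z, D t := by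
  set Gb : ℝ → ℝ := fun t => (μ (Ioi t)).toReal with hGb
  have hanti : Antitone Gb := by
    intro s t hst
    exact ENNReal.toReal_mono (measure_ne_top μ _) (measure_mono (Ioi_subset_Ioi hst))
  have hGb1 : ∀ t, Gb t ≤ 1 := by
    intro t
    rw [show (1:ℝ) = (μ univ).toReal by simp]
    exact ENNReal.toReal_mono (measure_ne_top μ _) (measure_mono (subset_univ _))
  have hGbnn : ∀ t, 0 ≤ Gb t := fun t => ENNReal.toReal_nonneg
  have hmeas : Measurable Gb := hanti.measurable
  have hlc : m = ∫ t in Ioi 0, Gb t := by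
    rw [hm, hint.integral_eq_integral_meas_lt hae]
    rfl
  have hint1 : IntegrableOn Gb (Ioc 0 z) := by
    apply Integrable.mono' (g := fun _ => (1:ℝ))
      (integrableOn_const measure_Ioc_lt_top.ne)
      (hmeas.aestronglyMeasurable.restrict)
    exact Filter.Eventually.of_forall fun t => by
      rw [Real.norm_eq_abs, abs_of_nonneg (hGbnn t)]; exact hGb1 t
  have hint2 : IntegrableOn Gb (Ioi z) := by
    apply Integrable.mono' hD (hmeas.aestronglyMeasurable.restrict)
    apply (ae_restrict_iff' measurableSet_Ioi).mpr
    exact Filter.Eventually.of_forall fun t ht => by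
      rw [Real.norm_eq_abs, abs_of_nonneg (hGbnn t)]; exact hDnn t ht
  have hsplit : ∫ t in Ioi 0, Gb t = (∫ t in Ioc 0 z, Gb t) + ∫ t in Ioi z, Gb t := by
    rw [← setIntegral_union (Ioc_disjoint_Ioi le_rfl) measurableSet_Ioi hint1 hint2,
      Ioc_union_Ioi_eq_Ioi hz]
  have hb1 : ∫ t in Ioc 0 z, Gb t ≤ z := by
    calc ∫ t in Ioc 0 z, Gb t ≤ ∫ _ in Ioc 0 z, (1:ℝ) := by
          apply setIntegral_mono_on hint1
            (integrableOn_const measure_Ioc_lt_top.ne) measurableSet_Ioc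
          exact fun t _ => hGb1 t
      _ = z := by
          simp [Real.volume_Ioc, ENNReal.toReal_ofReal hz, hz]
  have hb2 : ∫ t in Ioi z, Gb t ≤ ∫ t in Ioi z, D t :=
    setIntegral_mono_on hint2 hD measurableSet_Ioi hDnn
  rw [hlc, hsplit]
  linarith



lemma exists_lt_coe_lt {b : EReal} {x : ℝ} (hx : (x : EReal) < b) :
    ∃ y : ℝ, x < y ∧ (y : EReal) < b := by
  induction b with
  | bot => exact absurd hx (by simp)
  | coe c =>
      have hxc : x < c := EReal.coe_lt_coe_iff.mp hx
      exact ⟨(x + c) / 2, by linarith, EReal.coe_lt_coe_iff.mpr (by linarith)⟩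
  | top => exact ⟨x + 1, by linarith, EReal.coe_lt_top _⟩


lemma ereal_cases (b : EReal) (hb : b ≠ ⊥) : b = ⊤ ∨ ∃ c : ℝ, b = (c : ℝ) := by
  induction b with
  | bot => exact absurd rfl hb
  | coe c => exact Or.inr ⟨c, rfl⟩
  | top => exact Or.inl rfl

lemma tendsto_F_seq {F : ℝ → ℝ} {c : ℝ}
    (hFlim : Filter.Tendsto F (Filter.comap (fun x : ℝ => (x : EReal))
      (nhdsWithin (c : EReal) (Iio (c : EReal)))) (𝓝 1)) :
    Filter.Tendsto (fun n : ℕ => F (c - 1 / ((n : ℝ) + 1))) atTop (𝓝 1) := by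
  apply hFlim.comp
  rw [tendsto_comap_iff]
  rw [tendsto_nhdsWithin_iff]
  constructor
  · exact EReal.tendsto_coe.mpr (seq_tendsto c)
  · apply Eventually.of_forall
    intro n
    simp only [Function.comp_apply, mem_Iio]
    apply EReal.coe_lt_coe_iff.mpr
    have : 0 < 1 / ((n : ℝ) + 1) := by positivity
    linarith

end Stmt18Aux

open Stmt18Aux in
theorem stmt18 (lam : ℝ) (hlam : lam ∈ Set.Ico (0:ℝ) 1)
    (F f : ℝ → ℝ) (a : ℝ) (b : EReal) (ha : 0 ≤ a)
    (μ : Measure ℝ)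
    (hF : IsCDF F f a b) (hμ : InducedBy μ F a b)
    (hreg : LambdaRegular lam F f a b)
    (hint : Integrable (fun x : ℝ => x) μ)
    (m : ℝ) (hm : m = ∫ x, x ∂μ) :
    (μ (Set.Ici m)).toReal = 1 - F m ∧ 1 - F m ≥ cReg lam := by
  obtain ⟨hab, hFmono, hFa, hd, hFlim⟩ := hF
  obtain ⟨hprob, hIic⟩ := hμ
  obtain ⟨hlam0, hlam1⟩ := hlam
  haveI := hprob
  -- basic facts about F
  have hFle1 : ∀ x : ℝ, a ≤ x → (x : EReal) < b → F x ≤ 1 := by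
    intro x hx hxb
    have h2 : μ (Set.Iic x) ≤ 1 := prob_le_one
    rw [hIic x hx hxb] at h2
    exact ENNReal.ofReal_le_one.mp h2
  have hFstrict : ∀ x y : ℝ, a ≤ x → x < y → (y : EReal) < b → F x < F y := by
    intro x y hx hxy hyb
    have hmem : ∀ v ∈ Set.Icc x y, a ≤ v ∧ (v : EReal) < b := fun v hv =>
      ⟨hx.trans hv.1, lt_of_le_of_lt (EReal.coe_le_coe_iff.mpr hv.2) hyb⟩
    have hsm := strictMonoOn_of_deriv_pos (convex_Icc x y)
      (fun v hv => ((hd v (hmem v hv).1 (hmem v hv).2).1.continuousAt.continuousWithinAt))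
      (fun v hv => by
        rw [interior_Icc] at hv
        have h := hd v (hmem v ⟨hv.1.le, hv.2.le⟩).1 (hmem v ⟨hv.1.le, hv.2.le⟩).2
        rw [h.1.deriv]; exact h.2)
    exact hsm (Set.left_mem_Icc.mpr hxy.le) (Set.right_mem_Icc.mpr hxy.le) hxy
  have hFlt1 : ∀ x : ℝ, a ≤ x → (x : EReal) < b → F x < 1 := by
    intro x hx hxb
    obtain ⟨y, hxy, hyb⟩ := exists_lt_coe_lt hxb
    exact lt_of_lt_of_le (hFstrict x y hx hxy hyb) (hFle1 y (hx.trans hxy.le) hyb)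
  have hF0 : ∀ x : ℝ, a ≤ x → 0 ≤ F x := fun x hx => hFa ▸ hFmono hx
  -- a.e. bounds
  have hIica : μ (Set.Iic a) = 0 := by
    rw [hIic a le_rfl hab, hFa, ENNReal.ofReal_zero]
  have haea : ∀ᵐ x ∂μ, a ≤ x := by
    rw [ae_iff]
    refine measure_mono_null ?_ hIica
    intro x hx
    simp only [Set.mem_setOf_eq, not_le] at hx
    exact hx.le
  have haem : 0 ≤ᵐ[μ] fun x : ℝ => x := haea.mono fun x hx => le_trans ha hx
  have ham : a ≤ m := by
    rw [hm]
    calc a = ∫ _, a ∂μ := by simp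
    _ ≤ ∫ x, x ∂μ := integral_mono_ae (integrable_const a) hint haea
  -- b cases: m < b and vanishing beyond b
  have hbfacts : (m : EReal) < b ∧ ∀ t : ℝ, ¬ ((t : EReal) < b) → μ (Set.Ioi t) = 0 := by
    rcases ereal_cases b (fun hbot => by rw [hbot] at hab; exact (not_lt_bot hab)) with
      hbtop | ⟨c, hbc⟩
    · refine ⟨hbtop ▸ EReal.coe_lt_top m, fun t ht => absurd (hbtop ▸ EReal.coe_lt_top t) ht⟩
    · subst hbc
      have hac : a < c := EReal.coe_lt_coe_iff.mp hab
      have hμIioc : μ (Set.Iio c) = 1 := by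
        apply meas_Iio_eq
        obtain ⟨N, hN⟩ := exists_nat_one_div_lt (show (0:ℝ) < c - a by linarith)
        have hev : ∀ᶠ n : ℕ in atTop,
            ENNReal.ofReal (F (c - 1 / ((n : ℝ) + 1))) = μ (Set.Iic (c - 1 / ((n : ℝ) + 1))) := by
          filter_upwards [eventually_ge_atTop N] with n hn
          refine (hIic _ ?_ ?_).symm
          · have h1 : ((N:ℝ) + 1) ≤ ((n:ℝ) + 1) := by
              have := (Nat.cast_le (α := ℝ)).mpr hn; linarith
            have h2 := one_div_le_one_div_of_le (by positivity : (0:ℝ) < (N:ℝ) + 1) h1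
            linarith
          · apply EReal.coe_lt_coe_iff.mpr
            have : 0 < 1 / ((n : ℝ) + 1) := by positivity
            linarith
        have htd : Tendsto (fun n : ℕ => ENNReal.ofReal (F (c - 1 / ((n : ℝ) + 1)))) atTop
            (𝓝 (ENNReal.ofReal 1)) :=
          (ENNReal.continuous_ofReal.tendsto 1).comp (tendsto_F_seq hFlim)
        rw [show (1 : ℝ≥0∞) = ENNReal.ofReal 1 by simp]
        exact htd.congr' hev
      have hIcic : μ (Set.Ici c) = 0 := by
        have hc := measure_compl (measurableSet_Iio (a := c)) (measure_ne_top μ _)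
        rw [compl_Iio, hμIioc, measure_univ] at hc
        simp at hc
        exact hc
      constructor
      · have haltc : ∀ᵐ x ∂μ, x < c := by
          rw [ae_iff]
          refine measure_mono_null ?_ hIcic
          intro x hx
          simp only [Set.mem_setOf_eq, not_lt] at hx
          exact hx
        have hmlec : m ≤ c := by
          rw [hm]
          calc ∫ x, x ∂μ ≤ ∫ _, c ∂μ :=
                integral_mono_ae hint (integrable_const c) (haltc.mono fun x hx => hx.le)
          _ = c := by simp
        rcases lt_or_eq_of_le hmlec with h | h
        · exact EReal.coe_lt_coe_iff.mpr h
        · exfalso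
          have hzero : ∫ x, (c - x) ∂μ = 0 := by
            rw [integral_sub (integrable_const c) hint]
            simp [← hm, h]
          have hae0 := (integral_eq_zero_iff_of_nonneg_ae
            (haltc.mono fun x hx => by simp only [Pi.sub_apply, Pi.zero_apply]; linarith)
            ((integrable_const c).sub hint)).mp hzero
          have h3 : ∀ᵐ _x ∂μ, False := (hae0.and haltc).mono (fun x hx => by
            have h4 := hx.1
            simp only [Pi.sub_apply, Pi.zero_apply] at h4
            linarith [hx.2])
          rw [eventually_false_iff_eq_bot, ae_eq_bot] at h3
          exact (IsProbabilityMeasure.ne_zero μ) h3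
      · intro t ht
        have hct : (c : EReal) ≤ (t : EReal) := not_lt.mp ht
        have hct' : c ≤ t := EReal.coe_le_coe_iff.mp hct
        apply measure_mono_null (fun x hx => ?_) hIcic
        exact le_trans hct' (le_of_lt hx)
  obtain ⟨hmb, hbeyond⟩ := hbfacts
  -- part 1
  have hμIiom : μ (Set.Iio m) = ENNReal.ofReal (F m) := by
    rcases eq_or_lt_of_le ham with h | h
    · have h1 : μ (Set.Iio m) ≤ 0 := by
        rw [← h]
        exact le_trans (measure_mono Set.Iio_subset_Iic_self) (le_of_eq hIica)
      rw [le_zero_iff] at h1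
      rw [h1, ← h, hFa]
      simp
    · apply meas_Iio_eq
      obtain ⟨N, hN⟩ := exists_nat_one_div_lt (show (0:ℝ) < m - a by linarith)
      have hev : ∀ᶠ n : ℕ in atTop,
          ENNReal.ofReal (F (m - 1 / ((n : ℝ) + 1))) = μ (Set.Iic (m - 1 / ((n : ℝ) + 1))) := by
        filter_upwards [eventually_ge_atTop N] with n hn
        refine (hIic _ ?_ ?_).symm
        · have h1 : ((N:ℝ) + 1) ≤ ((n:ℝ) + 1) := by
            have := (Nat.cast_le (α := ℝ)).mpr hn; linarith
          have h2 := one_div_le_one_div_of_le (by positivity : (0:ℝ) < (N:ℝ) + 1) h1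
          linarith
        · refine lt_trans (EReal.coe_lt_coe_iff.mpr ?_) hmb
          have : 0 < 1 / ((n : ℝ) + 1) := by positivity
          linarith
      have hFcont : ContinuousAt F m := (hd m ham hmb).1.continuousAt
      have htd : Tendsto (fun n : ℕ => ENNReal.ofReal (F (m - 1 / ((n : ℝ) + 1)))) atTop
          (𝓝 (ENNReal.ofReal (F m))) :=
        (ENNReal.continuous_ofReal.tendsto (F m)).comp (hFcont.tendsto.comp (seq_tendsto m))
      exact htd.congr' hev
  have hFm0 : 0 ≤ F m := hF0 m ham
  have hFm1 : F m < 1 := hFlt1 m ham hmb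
  have part1 : (μ (Set.Ici m)).toReal = 1 - F m := by
    have hc := measure_compl (measurableSet_Iio (a := m)) (measure_ne_top μ _)
    rw [compl_Iio, hμIiom, measure_univ] at hc
    rw [hc, ENNReal.toReal_sub_of_le (ENNReal.ofReal_le_one.mpr hFm1.le) ENNReal.one_ne_top,
      ENNReal.toReal_one, ENNReal.toReal_ofReal hFm0]
  refine ⟨part1, ?_⟩
  -- part 2 setup
  have hGbar : ∀ t : ℝ, a ≤ t → (t : EReal) < b → (μ (Set.Ioi t)).toReal = 1 - F t := by
    intro t ht htb
    have hc := measure_compl (measurableSet_Iic (a := t)) (measure_ne_top μ _)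
    rw [compl_Iic, hIic t ht htb, measure_univ] at hc
    rw [hc, ENNReal.toReal_sub_of_le (ENNReal.ofReal_le_one.mpr (hFle1 t ht htb))
      ENNReal.one_ne_top, ENNReal.toReal_one, ENNReal.toReal_ofReal (hF0 t ht)]
  set q : ℝ := 1 - F m with hqdef
  have hq : 0 < q := by simp only [hqdef]; linarith
  have hqle : q ≤ 1 := by simp only [hqdef]; linarith
  set ρ : ℝ := (1 - F m) / f m with hρdef
  have hρpos : 0 < ρ := div_pos (by linarith) (hd m ham hmb).2
  rcases eq_or_lt_of_le hlam0 with hlz | hlpos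
  · -- lam = 0
    subst hlz
    have hreg' : MonotoneOn (fun v => -((1 - F v) / f v)) {x : ℝ | a ≤ x ∧ (x : EReal) < b} := by
      have h := hreg
      unfold LambdaRegular at h
      simpa using h
    have hbound : ∀ t : ℝ, a ≤ t → (t : EReal) < b →
        (1 - F t) * Real.exp ((t - m) / ρ) ≤ 1 - F m :=
      fun t hat htb => bound_zero hd hFlt1 hreg' ham hmb hρdef hat htb
    set z : ℝ := m + ρ * Real.log q with hzdef
    have hza : a ≤ z := by
      have hba := hbound a le_rfl hab
      rw [hFa, sub_zero, one_mul] at hba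
      have hlog : (a - m) / ρ ≤ Real.log q := (Real.le_log_iff_exp_le hq).mpr hba
      have := (div_le_iff₀ hρpos).mp hlog
      simp only [hzdef]
      linarith
    have hz0 : (0:ℝ) ≤ z := le_trans ha hza
    have htail := integral_tail_zero (q := q) (m := m) (z := z) hρpos hq
    have hDnn : ∀ t ∈ Set.Ioi z, (μ (Set.Ioi t)).toReal ≤ q * Real.exp (-(t - m) / ρ) := by
      intro t ht
      have hat : a ≤ t := le_trans hza (le_of_lt ht)
      by_cases htb : (t : EReal) < b
      · rw [hGbar t hat htb]
        have hb := hbound t hat htb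
        have he : (1 - F t) = ((1 - F t) * Real.exp ((t - m) / ρ)) * Real.exp (-(t - m) / ρ) := by
          rw [mul_assoc, ← Real.exp_add, show (t - m) / ρ + -(t - m) / ρ = 0 by ring,
            Real.exp_zero, mul_one]
        rw [he]
        exact mul_le_mul_of_nonneg_right hb (Real.exp_nonneg _)
      · rw [hbeyond t htb]
        simp only [ENNReal.toReal_zero]
        positivity
    have hmean := mean_le hm hint haem hz0 htail.1 hDnn
    rw [htail.2] at hmean
    have hexp : Real.exp (-(z - m) / ρ) = q⁻¹ := by
      simp only [hzdef]
      rw [show -(m + ρ * Real.log q - m) / ρ = -Real.log q by field_simp; ring,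
        Real.exp_neg, Real.exp_log hq]
    rw [hexp] at hmean
    have hqq : q * ρ * q⁻¹ = ρ := by rw [mul_comm q ρ, mul_assoc, mul_inv_cancel₀ hq.ne', mul_one]
    rw [hqq] at hmean
    -- m ≤ m + ρ log q + ρ
    have hlogq : -1 ≤ Real.log q := by
      simp only [hzdef] at hmean
      nlinarith
    have : Real.exp (-1) ≤ q := by
      calc Real.exp (-1) ≤ Real.exp (Real.log q) := Real.exp_le_exp.mpr hlogq
      _ = q := Real.exp_log hq
    rw [show cReg 0 = (Real.exp 1)⁻¹ by simp [cReg], ← Real.exp_neg]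
    exact this
  · -- 0 < lam
    have hbound : ∀ t : ℝ, a ≤ t → (t : EReal) < b → 0 < ρ + lam * (t - m) →
        (1 - F t) * (ρ + lam * (t - m)) ^ (1 / lam) ≤ q * ρ ^ (1 / lam) :=
      fun t hat htb hden => bound_pos hlpos hd hFlt1 hreg ham hmb hρdef hat htb hden
    set e : ℝ := q ^ lam with hedef
    have he : 0 < e := Real.rpow_pos_of_pos hq lam
    have hele : e ≤ 1 := Real.rpow_le_one hq.le hqle hlam0
    set z : ℝ := m - ρ * (1 - e) / lam with hzdef
    have hzden : ρ + lam * (z - m) = ρ * e := by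
      simp only [hzdef]
      field_simp
      ring
    have hzpos : 0 < ρ + lam * (z - m) := by rw [hzden]; positivity
    have hlamz : lam * z = lam * m - ρ * (1 - e) := by
      simp only [hzdef]
      field_simp
    have hza : a ≤ z := by
      by_cases hpos : 0 < ρ + lam * (a - m)
      · have hba := hbound a le_rfl hab hpos
        rw [hFa, sub_zero, one_mul] at hba
        have h1 := Real.rpow_le_rpow (Real.rpow_nonneg (by linarith) _) hba hlam0
        rw [← Real.rpow_mul (by linarith : (0:ℝ) ≤ ρ + lam * (a - m)),
          one_div_mul_cancel hlpos.ne', Real.rpow_one,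
          Real.mul_rpow hq.le (Real.rpow_nonneg hρpos.le _),
          ← Real.rpow_mul hρpos.le, one_div_mul_cancel hlpos.ne', Real.rpow_one] at h1
        -- h1 : ρ + lam * (a - m) ≤ q ^ lam * ρ
        have h2 : lam * a ≤ lam * z := by rw [hlamz]; simp only [hedef] at h1 ⊢; nlinarith
        exact le_of_mul_le_mul_left h2 hlpos
      · push_neg at hpos
        have h2 : lam * a ≤ lam * z := by
          rw [hlamz]
          have h3 : 0 ≤ ρ * e := by positivity
          nlinarith
        exact le_of_mul_le_mul_left h2 hlpos
    have hz0 : (0:ℝ) ≤ z := le_trans ha hza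
    have htail := integral_tail_pos (ρ := ρ) (m := m) (z := z) hlpos hlam1 hzpos
    set D : ℝ → ℝ := fun t => (q * ρ ^ (1 / lam)) * (ρ + lam * (t - m)) ^ (-(1 / lam)) with hDdef
    have hDint : IntegrableOn D (Set.Ioi z) := htail.1.const_mul _
    have hDval : ∫ t in Set.Ioi z, D t = ρ * e / (1 - lam) := by
      simp only [hDdef]
      rw [MeasureTheory.integral_const_mul, htail.2, hzden]
      rw [Real.mul_rpow hρpos.le he.le, ← Real.rpow_mul hq.le,
        show lam * ((lam - 1) / lam) = lam - 1 by field_simp]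
      rw [show q * ρ ^ (1 / lam) * (ρ ^ ((lam - 1) / lam) * q ^ (lam - 1) / (1 - lam))
        = (ρ ^ (1 / lam) * ρ ^ ((lam - 1) / lam)) * (q * q ^ (lam - 1)) / (1 - lam) by ring]
      rw [← Real.rpow_add hρpos, show 1 / lam + (lam - 1) / lam = 1 by field_simp; ring,
        Real.rpow_one]
      nth_rewrite 1 [show q = q ^ (1:ℝ) from (Real.rpow_one q).symm]
      rw [← Real.rpow_add hq, show (1:ℝ) + (lam - 1) = lam by ring]
    have hDnn : ∀ t ∈ Set.Ioi z, (μ (Set.Ioi t)).toReal ≤ D t := by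
      intro t ht
      have hat : a ≤ t := le_trans hza (le_of_lt ht)
      have hdent : 0 < ρ + lam * (t - m) := by
        have : lam * (z - m) ≤ lam * (t - m) :=
          mul_le_mul_of_nonneg_left (by linarith [Set.mem_Ioi.mp ht]) hlam0
        linarith
      by_cases htb : (t : EReal) < b
      · rw [hGbar t hat htb]
        have hb := hbound t hat htb hdent
        have hrw : (1 - F t) = ((1 - F t) * (ρ + lam * (t - m)) ^ (1 / lam))
            * (ρ + lam * (t - m)) ^ (-(1 / lam)) := by
          rw [mul_assoc, ← Real.rpow_add hdent]
          simp
        rw [hrw]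
        simp only [hDdef]
        exact mul_le_mul_of_nonneg_right hb (Real.rpow_nonneg hdent.le _)
      · rw [hbeyond t htb]
        simp only [ENNReal.toReal_zero, hDdef]
        positivity
    have hmean := mean_le hm hint haem hz0 hDint hDnn
    rw [hDval] at hmean
    -- m ≤ m - ρ(1-e)/lam + ρ e/(1-lam)
    have hkey : ρ * (1 - e) / lam ≤ ρ * e / (1 - lam) := by
      simp only [hzdef] at hmean
      linarith
    have hkey2 : (ρ * (1 - e)) * (1 - lam) ≤ (ρ * e) * lam :=
      (div_le_div_iff₀ hlpos (by linarith)).mp hkey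
    have hkey3 : (1 - e) * (1 - lam) ≤ e * lam := by
      have h := hkey2
      rw [show (ρ * (1 - e)) * (1 - lam) = ρ * ((1 - e) * (1 - lam)) from by ring,
        show (ρ * e) * lam = ρ * (e * lam) from by ring] at h
      exact (mul_le_mul_iff_right₀ hρpos).mp h
    have hkey4 : 1 - lam - e + e * lam ≤ e * lam := by linear_combination hkey3
    have hfin : 1 - lam ≤ e := by linarith
    have hq1 : (1 - lam) ^ (1 / lam) ≤ q := by
      have h1 := Real.rpow_le_rpow (by linarith : (0:ℝ) ≤ 1 - lam) hfin
        (by positivity : (0:ℝ) ≤ 1 / lam)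
      rwa [hedef, ← Real.rpow_mul hq.le, mul_one_div, div_self hlpos.ne',
        Real.rpow_one] at h1
    rw [show cReg lam = (1 - lam) ^ (1 / lam) by simp [cReg, hlpos.ne']]
    exact hq1
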